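/- Let 𝒜 be a Hilbert evolution algebra with a natural orthonormal basis 𝓑 = {e_i}_{i∈ℕ}. If G(𝒜,𝓑) contains a ray (an infinite directed path {v₁, v₂, …} with pairwise distinct vertices), then there exists u ∈ 𝒜 with u^n ≠ 0 for every n ∈ ℕ; in particular 𝒜 is not nil (and not nilpotent). -/

import Mathlib

noncomputable section

open scoped ENat

/-! ### Digraph notions associated to a matrix of structural constants

The associated digraph `G(𝒜,𝓑)` has vertex set `ℕ` and a directed edge `(i,k)` iff
`ω i k ≠ 0`. -/

/-- `DsetU ω m U` is the set `D^m(U)` of `m`-th generation descendants of `U`: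
`D^0(U) = U` and `D^{m+1}(U) = {k | ∃ i ∈ D^m(U), ω i k ≠ 0}`. -/
def DsetU (ω : ℕ → ℕ → ℂ) : ℕ → Set ℕ → Set ℕ
  | 0, U => U
  | m + 1, U => {k | ∃ i ∈ DsetU ω m U, ω i k ≠ 0}

/-- `Dm ω m i = D^m(i)`, the `m`-th generation descendants of the vertex `i`. -/
def Dm (ω : ℕ → ℕ → ℂ) (m i : ℕ) : Set ℕ := DsetU ω m {i}

/-- `Desc ω i = D(i) = ⋃_{m ≥ 1} D^m(i)`, the set of descendants of `i`. -/
def Desc (ω : ℕ → ℕ → ℂ) (i : ℕ) : Set ℕ := ⋃ m ∈ {m : ℕ | 1 ≤ m}, Dm ω m i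

/-- `gdist ω i u` is the length of a shortest directed path (walk) from `i` to `u`. -/
def gdist (ω : ℕ → ℕ → ℂ) (i u : ℕ) : ℕ := sInf {n : ℕ | u ∈ Dm ω n i}

/-- The depth `δ(G_i) = sup {dist(i,u) : u ∈ D(i)}` of the subgraph `G_i` induced on the
descendants of `i`, as an extended natural number (`⊤` when unbounded). -/
def depth (ω : ℕ → ℕ → ℂ) (i : ℕ) : ℕ∞ := ⨆ u ∈ Desc ω i, (gdist ω i u : ℕ∞)

/-- `p 0, p 1, …, p n` is an oriented cycle: a non-empty directed path in which the only
repeated vertices are the first and the last one. -/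
def IsOrientedCycle (ω : ℕ → ℕ → ℂ) (n : ℕ) (p : ℕ → ℕ) : Prop :=
  0 < n ∧ (∀ m < n, ω (p m) (p (m + 1)) ≠ 0) ∧ p n = p 0 ∧
    ∀ a b, a < b → b < n → p a ≠ p b

/-- The digraph associated to `ω` contains an oriented cycle. -/
def HasOrientedCycle (ω : ℕ → ℕ → ℂ) : Prop := ∃ n p, IsOrientedCycle ω n p

/-! ### Algebra notions -/

variable {H : Type*} [NormedAddCommGroup H] [InnerProductSpace ℂ H] [CompleteSpace H]

/-- The structural constants of a Hilbert evolution algebra with product `mul` relative to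
the natural orthonormal basis `e`: `ω i k` is the `k`-th coordinate of `e i · e i`,
so that `e i · e i = ∑'_k ω i k • e k`. -/
def structConst (mul : H →ₗ[ℂ] H →ₗ[ℂ] H) (e : HilbertBasis ℕ ℂ H) (i k : ℕ) : ℂ :=
  e.repr (mul (e i) (e i)) k

/-- Principal powers: `ppow mul v n = v^n` for `n ≥ 1` (with the junk value `v` at `n = 0`):
`v^1 = v` and `v^{n+1} = v^n · v`. -/
def ppow (mul : H →ₗ[ℂ] H →ₗ[ℂ] H) (v : H) : ℕ → H
  | 0 => v
  | 1 => v
  | n + 2 => mul (ppow mul v (n + 1)) v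

/-- The algebra is nil: every element has a vanishing principal power. -/
def IsNil (mul : H →ₗ[ℂ] H →ₗ[ℂ] H) : Prop := ∀ v : H, ∃ n : ℕ, 1 ≤ n ∧ ppow mul v n = 0

/-- The product `S·T` of two subspaces: the span of all products `x·y`, `x ∈ S`, `y ∈ T`. -/
def mulSub (mul : H →ₗ[ℂ] H →ₗ[ℂ] H) (S T : Submodule ℂ H) : Submodule ℂ H :=
  Submodule.span ℂ {z : H | ∃ x ∈ S, ∃ y ∈ T, z = mul x y}

/-- The powers `𝒜^n` (for `n ≥ 1`, with the junk value `⊤` at `n = 0`):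
`𝒜^1 = 𝒜` and `𝒜^{n+1} = ∑_{i=1}^{n} 𝒜^i 𝒜^{n+1-i}`. -/
def apow (mul : H →ₗ[ℂ] H →ₗ[ℂ] H) (n : ℕ) : Submodule ℂ H :=
  n.strongRecOn fun n ih =>
    match n, ih with
    | 0, _ => ⊤
    | 1, _ => ⊤
    | m + 2, ih =>
      ⨆ (i : ℕ) (h1 : 1 ≤ i) (h2 : i ≤ m + 1),
        mulSub mul (ih i (by omega)) (ih (m + 2 - i) (by omega))

/-- The algebra is nilpotent: `𝒜^n = 0` for some `n`. -/
def IsNilpotent' (mul : H →ₗ[ℂ] H →ₗ[ℂ] H) : Prop := ∃ n : ℕ, 1 ≤ n ∧ apow mul n = ⊥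

/-- The right powers `𝒜^{<n>}` (for `n ≥ 1`, with the junk value `⊤` at `n = 0`):
`𝒜^{<1>} = 𝒜` and `𝒜^{<n+1>} = 𝒜^{<n>}𝒜`. -/
def rapow (mul : H →ₗ[ℂ] H →ₗ[ℂ] H) : ℕ → Submodule ℂ H
  | 0 => ⊤
  | 1 => ⊤
  | n + 2 => mulSub mul (rapow mul (n + 1)) ⊤

/-- The algebra is right nilpotent: `𝒜^{<n>} = 0` for some `n`. -/
def IsRightNilpotent (mul : H →ₗ[ℂ] H →ₗ[ℂ] H) : Prop := ∃ n : ℕ, 1 ≤ n ∧ rapow mul n = ⊥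

/-- The index of right nilpotency `n_r(𝒜) = min {n : 𝒜^{<n>} = 0}`. -/
def rNilIndex (mul : H →ₗ[ℂ] H →ₗ[ℂ] H) : ℕ := sInf {n : ℕ | 1 ≤ n ∧ rapow mul n = ⊥}

/-- Powers of a subset `I ⊆ 𝒜` (for `n ≥ 1`, with the junk value `I` at `n = 0`):
`I^{<1>} = I` and `I^{<n+1>}` is the set of finite sums `∑_j x_j · y_j` with
`x_j ∈ I^{<n>}` and `y_j ∈ I`. -/
def setPow (mul : H →ₗ[ℂ] H →ₗ[ℂ] H) (I : Set H) : ℕ → Set H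
  | 0 => I
  | 1 => I
  | n + 2 => {v : H | ∃ (m : ℕ) (x y : Fin m → H),
      (∀ j, x j ∈ setPow mul I (n + 1)) ∧ (∀ j, y j ∈ I) ∧
        v = ∑ j, mul (x j) (y j)}

end

/-!
If the ray has a back edge `p i → p j` with `j ≤ i`, the digraph has a closed walk, and a closed
walk of minimal length is an induced cycle: each of its vertices has exactly one in-neighbour on
it. For `u` the sum of the basis vectors of this cycle, the coordinate of `u^(n+1)` at a cycle
vertex is the coordinate of `u^n` at its in-neighbour times a nonzero structure constant, so it
never vanishes.

Otherwise the structure constants are triangular along the ray, `ω (p i) (p j) = 0` for `j ≤ i`.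
For `u = ∑ 2⁻ⁱ e (p i)` the coordinates of `u^(n+1)` vanish at `p 0, …, p (n-1)`, so its
coordinate at `p n` is `2⁻⁽ⁿ⁻¹⁾` times the coordinate of `u^n` at `p (n-1)` times
`ω (p (n-1)) (p n) ≠ 0`.

Finally `u^n ∈ 𝒜^n`, so an algebra with such a `u` is neither nil nor nilpotent.
-/

section ClosedWalk

variable {α : Type*} {r : α → α → Prop} {L : ℕ} {g : ℕ → α}

def IsClosedWalk (r : α → α → Prop) (L : ℕ) (g : ℕ → α) : Prop :=
  0 < L ∧ g L = g 0 ∧ ∀ t < L, r (g t) (g (t + 1))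

theorem IsClosedWalk.rel_mod (h : IsClosedWalk r L g) (t : ℕ) :
    r (g (t % L)) (g ((t + 1) % L)) := by
  obtain ⟨hL, hclosed, hrel⟩ := h
  have htL := Nat.mod_lt t hL
  rw [← Nat.mod_add_mod]
  rcases (Nat.add_one_le_of_lt htL).lt_or_eq with hlt | hlast
  · rw [Nat.mod_eq_of_lt hlt]
    exact hrel _ htL
  · rw [hlast, Nat.mod_self]
    simpa [hlast, hclosed] using hrel _ htL

theorem isClosedWalk_of_back_edge {a b d : ℕ} (hrel : ∀ t, r (g t) (g (t + 1)))
    (hab : r (g a) (g b)) (hd : g (b + d) = g a) :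
    IsClosedWalk r (d + 1) fun t => if t = 0 then g a else g (b + t - 1) := by
  refine ⟨d.succ_pos, by simpa using hd, fun t _ => ?_⟩
  rcases t with _ | t
  · simpa using hab
  · simpa [Nat.add_assoc] using hrel (b + t)

theorem IsClosedWalk.exists_finset_existsUnique_rel (h : IsClosedWalk r L g) :
    ∃ S : Finset α, S.Nonempty ∧ ∀ s ∈ S, ∃! x, x ∈ S ∧ r x s := by
  classical
  have hex : ∃ k g, IsClosedWalk r k g := ⟨L, g, h⟩
  obtain ⟨g, hg⟩ := Nat.find_spec hex
  set k := Nat.find hex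
  have hk : 0 < k := hg.1
  set c : ℕ → α := fun t => g (t % k) with hc
  have hc_rel : ∀ t, r (c t) (c (t + 1)) := hg.rel_mod
  have hc_add : ∀ t, c (t + k) = c t := by simp [hc]
  have hchord : ∀ a b, a < k → b < k → r (c a) (c b) → c a = c (b + k - 1) := by
    intro a b ha hb hab
    -- otherwise `c a → c b → … → c a` would be a closed walk shorter than `k`
    obtain ⟨d, hdk, hd⟩ : ∃ d < k, c (b + d) = c a := by
      by_cases hba : b ≤ a
      · exact ⟨a - b, by omega, by rw [Nat.add_sub_cancel' hba]⟩
      · exact ⟨a + k - b, by omega, by rw [show b + (a + k - b) = a + k by omega, hc_add]⟩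
    have := Nat.find_min' hex ⟨_, isClosedWalk_of_back_edge hc_rel hab hd⟩
    rw [← hd, show b + k - 1 = b + d by omega]
  refine ⟨(Finset.range k).image c, ⟨c 0, Finset.mem_image_of_mem c (by simpa using hk)⟩, ?_⟩
  simp only [Finset.mem_image, Finset.mem_range]
  rintro _ ⟨b, hb, rfl⟩
  refine ⟨c (b + k - 1), ⟨⟨(b + k - 1) % k, Nat.mod_lt _ hk, by simp [hc]⟩, ?_⟩, ?_⟩
  · simpa [show b + k - 1 + 1 = b + k by omega, hc_add] using hc_rel (b + k - 1)
  · rintro _ ⟨⟨a, ha, rfl⟩, hab⟩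
    exact hchord a b ha hb hab

end ClosedWalk

section

variable {H : Type*} [NormedAddCommGroup H] [InnerProductSpace ℂ H]

theorem Orthonormal.inner_eq_of_hasSum {𝕜 E ι : Type*} [RCLike 𝕜] [NormedAddCommGroup E]
    [InnerProductSpace 𝕜 E] {v : ι → E} (hv : Orthonormal 𝕜 v) {c : ι → 𝕜} {y : E}
    (hy : HasSum (fun i => c i • v i) y) (i : ι) : inner 𝕜 (v i) y = c i := by
  classical
  refine (hy.mapL (innerSL 𝕜 (v i))).unique ?_
  have := hasSum_single (f := fun j => innerSL 𝕜 (v i) (c j • v j)) i fun j hj => by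
    simp [orthonormal_iff_ite.mp hv, Ne.symm hj]
  simpa [inner_smul_right, hv.1 i] using this

theorem ppow_add_two (mul : H →ₗ[ℂ] H →ₗ[ℂ] H) (v : H) (n : ℕ) :
    ppow mul v (n + 2) = mul (ppow mul v (n + 1)) v := rfl

theorem apow_one (mul : H →ₗ[ℂ] H →ₗ[ℂ] H) : apow mul 1 = ⊤ := by
  rw [apow, Nat.strongRecOn_eq]

theorem apow_add_two (mul : H →ₗ[ℂ] H →ₗ[ℂ] H) (m : ℕ) :
    apow mul (m + 2) = ⨆ (i : ℕ) (_ : 1 ≤ i) (_ : i ≤ m + 1),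
      mulSub mul (apow mul i) (apow mul (m + 2 - i)) := by
  rw [apow, Nat.strongRecOn_eq]
  rfl

theorem ppow_mem_apow (mul : H →ₗ[ℂ] H →ₗ[ℂ] H) (v : H) {n : ℕ} (hn : 1 ≤ n) :
    ppow mul v n ∈ apow mul n := by
  induction n, hn using Nat.le_induction with
  | base => simp [apow_one]
  | succ n hn ih =>
    obtain ⟨m, rfl⟩ := Nat.exists_eq_add_of_le' hn
    rw [ppow_add_two, apow_add_two]
    refine Submodule.mem_iSup_of_mem (m + 1) <| Submodule.mem_iSup_of_mem (by omega) <|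
      Submodule.mem_iSup_of_mem (by omega) <| Submodule.subset_span ⟨_, ih, v, ?_, rfl⟩
    simp [apow_one]

theorem IsNilpotent'.isNil {mul : H →ₗ[ℂ] H →ₗ[ℂ] H} (h : IsNilpotent' mul) : IsNil mul := by
  obtain ⟨n, hn, hbot⟩ := h
  exact fun v => ⟨n, hn, by simpa [hbot] using ppow_mem_apow mul v hn⟩

structure IsHilbertEvolutionAlgebra (mul : H →ₗ[ℂ] H →ₗ[ℂ] H) (e : HilbertBasis ℕ ℂ H) :
    Prop where
  comm : ∀ x y, mul x y = mul y x
  continuous_mul_left : ∀ x, Continuous fun y => mul x y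
  mul_basis_of_ne : ∀ i j, i ≠ j → mul (e i) (e j) = 0

namespace IsHilbertEvolutionAlgebra

variable {mul : H →ₗ[ℂ] H →ₗ[ℂ] H} {e : HilbertBasis ℕ ℂ H}

theorem basis_mul (hA : IsHilbertEvolutionAlgebra mul e) (j : ℕ) (x : H) :
    mul (e j) x = inner ℂ (e j) x • mul (e j) (e j) := by
  classical
  let Lj : H →L[ℂ] H := ⟨mul (e j), hA.continuous_mul_left (e j)⟩
  refine ((e.hasSum_repr x).mapL Lj).unique ?_
  convert hasSum_ite_eq j (inner ℂ (e j) x • mul (e j) (e j)) using 2 with k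
  split_ifs with hkj
  · simp [Lj, hkj, e.repr_apply_apply]
  · simp [Lj, hA.mul_basis_of_ne j k (Ne.symm hkj)]

theorem hasSum_inner_mul (hA : IsHilbertEvolutionAlgebra mul e) {ι : Type*} {c : ι → ℂ}
    {q : ι → ℕ} {y : H} (hy : HasSum (fun t => c t • e (q t)) y) (x : H) (j : ℕ) :
    HasSum (fun t => c t * inner ℂ (e (q t)) x * structConst mul e (q t) j)
      (inner ℂ (e j) (mul x y)) := by
  let Lx : H →L[ℂ] H := ⟨mul x, hA.continuous_mul_left x⟩
  have h := hy.mapL ((innerSL ℂ (e j)).comp Lx)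
  convert h using 1
  · rfl
  · funext t
    change _ = inner ℂ (e j) (mul x (c t • e (q t)))
    rw [map_smul, hA.comm x, hA.basis_mul, inner_smul_right, inner_smul_right, structConst,
      e.repr_apply_apply]
    ring
  · rfl

theorem exists_forall_ppow_ne_zero_of_existsUnique (hA : IsHilbertEvolutionAlgebra mul e)
    {S : Finset ℕ} (hS : S.Nonempty) (huniq : ∀ s ∈ S, ∃! r, r ∈ S ∧ structConst mul e r s ≠ 0) :
    ∃ u : H, ∀ n : ℕ, 1 ≤ n → ppow mul u n ≠ 0 := by
  set u : H := ∑ s : S, e s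
  have hu : HasSum (fun s : S => (1 : ℂ) • e s) u := by
    simp only [one_smul]
    exact hasSum_fintype _
  have he : Orthonormal ℂ fun s : S => e s := e.orthonormal.comp _ Subtype.val_injective
  have key : ∀ n, ∀ s ∈ S, inner ℂ (e s) (ppow mul u (n + 1)) ≠ 0 := by
    intro n
    induction n with
    | zero =>
      intro s hs
      exact (he.inner_eq_of_hasSum hu ⟨s, hs⟩).trans_ne one_ne_zero
    | succ n ih =>
      intro s hs
      obtain ⟨r, ⟨hr, hrs⟩, hr_unique⟩ := huniq s hs
      rw [ppow_add_two, ((hA.hasSum_inner_mul hu _ s).unique (hasSum_single ⟨r, hr⟩ ?_))]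
      · simpa using mul_ne_zero (ih r hr) hrs
      · intro t ht
        have : structConst mul e t s = 0 := by
          by_contra h
          exact ht (Subtype.ext (hr_unique t ⟨t.2, h⟩))
        simp [this]
  obtain ⟨s, hs⟩ := hS
  refine ⟨u, fun n hn h0 => ?_⟩
  obtain ⟨m, rfl⟩ := Nat.exists_eq_add_of_le' hn
  exact key m s hs (by rw [h0, inner_zero_right])

theorem exists_forall_ppow_ne_zero_of_ray [CompleteSpace H] (hA : IsHilbertEvolutionAlgebra mul e)
    {p : ℕ → ℕ} (hinj : Function.Injective p) (hray : ∀ i, structConst mul e (p i) (p (i + 1)) ≠ 0)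
    (hback : ∀ i j, j ≤ i → structConst mul e (p i) (p j) = 0) :
    ∃ u : H, ∀ n : ℕ, 1 ≤ n → ppow mul u n ≠ 0 := by
  set a : ℕ → ℂ := fun i => (1 / 2 : ℂ) ^ i
  have ha : ∀ i, a i ≠ 0 := fun i => by simp [a]
  have hsum : Summable fun i => a i • e (p i) := by
    refine Summable.of_norm (summable_geometric_two.congr fun i => ?_)
    simp [a, norm_smul, e.orthonormal.1]
  set u := ∑' i, a i • e (p i)
  have hu : HasSum (fun i => a i • e (p i)) u := hsum.hasSum
  have key : ∀ n, (∀ j < n, inner ℂ (e (p j)) (ppow mul u (n + 1)) = 0) ∧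
      inner ℂ (e (p n)) (ppow mul u (n + 1)) ≠ 0 := by
    intro n
    induction n with
    | zero =>
      refine ⟨by simp, ?_⟩
      exact ((e.orthonormal.comp p hinj).inner_eq_of_hasSum hu 0).trans_ne (ha 0)
    | succ n ih =>
      have hstep : ∀ j ≤ n + 1, inner ℂ (e (p j)) (ppow mul u (n + 2)) =
          a n * inner ℂ (e (p n)) (ppow mul u (n + 1)) * structConst mul e (p n) (p j) := by
        intro j hj
        refine (hA.hasSum_inner_mul hu _ _).unique (hasSum_single n fun i hi => ?_)
        rcases Nat.lt_or_gt_of_ne hi with hin | hni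
        · simp [ih.1 i hin]
        · simp [hback i j (by omega)]
      refine ⟨fun j hj => ?_, ?_⟩
      · rw [hstep j hj.le, hback n j (by omega), mul_zero]
      · rw [hstep (n + 1) le_rfl]
        exact mul_ne_zero (mul_ne_zero (ha n) ih.2) (hray n)
  refine ⟨u, fun n hn h0 => ?_⟩
  obtain ⟨m, rfl⟩ := Nat.exists_eq_add_of_le' hn
  exact (key m).2 (by rw [h0, inner_zero_right])

end IsHilbertEvolutionAlgebra

end

noncomputable section

variable {H : Type*} [NormedAddCommGroup H] [InnerProductSpace ℂ H] [CompleteSpace H]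

/-- Let `𝒜` be a complex separable Hilbert evolution algebra with natural
orthonormal basis `𝓑 = {e i}`. If `G(𝒜,𝓑)` contains a ray (an infinite directed path
`p 0, p 1, p 2, …` with pairwise distinct vertices), then there exists `u ∈ 𝒜` with
`u^n ≠ 0` for every `n ≥ 1`; in particular `𝒜` is not nil and not nilpotent. -/
theorem stmt_17
    (mul : H →ₗ[ℂ] H →ₗ[ℂ] H)
    (hcomm : ∀ x y : H, mul x y = mul y x)
    (hcont : ∀ x : H, Continuous fun y => mul x y)
    (e : HilbertBasis ℕ ℂ H)
    (hnat : ∀ i j : ℕ, i ≠ j → mul (e i) (e j) = 0)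
    (ω : ℕ → ℕ → ℂ)
    (hω : ∀ i k : ℕ, ω i k = structConst mul e i k)
    (p : ℕ → ℕ) (hinj : Function.Injective p)
    (hray : ∀ i : ℕ, ω (p i) (p (i + 1)) ≠ 0) :
    (∃ u : H, ∀ n : ℕ, 1 ≤ n → ppow mul u n ≠ 0) ∧
      ¬ IsNil mul ∧ ¬ IsNilpotent' mul := by
  obtain rfl : ω = structConst mul e := funext₂ hω
  have hA : IsHilbertEvolutionAlgebra mul e := ⟨hcomm, hcont, hnat⟩
  obtain ⟨u, hu⟩ : ∃ u : H, ∀ n : ℕ, 1 ≤ n → ppow mul u n ≠ 0 := by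
    by_cases hback : ∃ i j, j ≤ i ∧ structConst mul e (p i) (p j) ≠ 0
    · obtain ⟨i, j, hji, hij⟩ := hback
      have hcycle := isClosedWalk_of_back_edge (r := fun x y => structConst mul e x y ≠ 0)
        hray hij (d := i - j) (by rw [Nat.add_sub_cancel' hji])
      obtain ⟨S, hS, huniq⟩ := hcycle.exists_finset_existsUnique_rel
      exact hA.exists_forall_ppow_ne_zero_of_existsUnique hS huniq
    · push Not at hback
      exact hA.exists_forall_ppow_ne_zero_of_ray hinj hray hback
  have hnil : ¬ IsNil mul := fun h =>
    let ⟨n, hn, h0⟩ := h u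
    hu n hn h0
  exact ⟨⟨u, hu⟩, hnil, fun h => hnil h.isNil⟩

end
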